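/- For natural numbers p and q, let C^{p,q} denote the Clifford algebra over ℝ of the quadratic form on ℝ^{p+q} given by −(x₁)² − … − (x_p)² + (x_{p+1})² + … + (x_{p+q})². Then there is an isomorphism of ℝ-algebras C^{p+1,q+1} ≃ Matrix (Fin 2) (Fin 2) (C^{p,q}). -/

import Mathlib

open CliffordAlgebra

/-- The diagonal quadratic form on `ℝ^(p+q)` with `p` coefficients `−1` and `q`
coefficients `+1`:  `−x₁² − … − x_p² + x_{p+1}² + … + x_{p+q}²`. -/
noncomputable def Qpq (p q : ℕ) : QuadraticForm ℝ (Fin (p + q) → ℝ) :=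
  QuadraticMap.weightedSumSquares ℝ (fun i => if (i : ℕ) < p then (-1 : ℝ) else 1)

/-- The Clifford algebra `C^{p,q}`. -/
noncomputable abbrev Cpq (p q : ℕ) : Type :=
  CliffordAlgebra (Qpq p q)

/-!
Let `H` be the plane `R × R` with the form `-a² + b²`, and let `e`, `f` be the images in
`Cl(Q ⊕ H)` of its basis vectors: `e² = -1`, `f² = 1`, `fe = -ef`, and `t = ef` squares to `1`
and commutes with `M`. Then `u = (1 + t) / 2` is an idempotent that `f` conjugates to `1 - u`, so
`u, uf, (1 - u)f, 1 - u` are `2 × 2` matrix units, i.e. an embedding of `M₂(R)`; and `v ↦ vt`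
satisfies `(vt)² = Q v`, giving a copy of `Cl(Q)` that commutes with `e` and `f`. Together they
give `M₂(Cl Q) ≅ Cl Q ⊗ M₂(R) → Cl(Q ⊕ H)`, inverse to the Clifford map sending `(v, a, b)`
to `[[v, a + b], [b - a, -v]]`. Reordering coordinates, `Q_{p+1,q+1} ≅ Q_{p,q} ⊕ H`.
-/

open scoped TensorProduct

section MatrixUnits

variable {R A n : Type*} [CommSemiring R] [Semiring A] [Algebra R A] [Fintype n] [DecidableEq n]
  (P : n → n → A) (hmul : ∀ i j k l, P i j * P k l = if j = k then P i l else 0)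
  (hone : ∑ i, P i i = 1)

noncomputable def Matrix.algHomOfMatrixUnits : Matrix n n R →ₐ[R] A :=
  AlgHom.ofLinearMap (Matrix.liftLinear R fun i j => LinearMap.toSpanSingleton R A (P i j))
    (by simp [Matrix.liftLinear_apply, Matrix.one_apply, ite_smul, hone])
    (fun x y => by
      simp only [Matrix.liftLinear_apply, LinearMap.toSpanSingleton_apply, Finset.sum_mul,
        Finset.mul_sum, smul_mul_smul_comm, hmul, smul_ite, smul_zero, Matrix.mul_apply,
        Finset.sum_smul, Finset.sum_ite_eq', Finset.mem_univ, if_true]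
      rw [Finset.sum_comm]
      conv_rhs => rw [Finset.sum_comm]
      exact Finset.sum_congr rfl fun _ _ => Finset.sum_comm)

theorem Matrix.algHomOfMatrixUnits_apply (m : Matrix n n R) :
    Matrix.algHomOfMatrixUnits P hmul hone m = ∑ i, ∑ j, m i j • P i j := by
  simp [Matrix.algHomOfMatrixUnits, Matrix.liftLinear_apply]

end MatrixUnits

section Ring

variable {A : Type*} [Ring A]

def matrixUnitsOfIdempotent (p s : A) : Fin 2 → Fin 2 → A :=
  ![![p, p * s], ![(1 - p) * s, 1 - p]]

theorem matrixUnitsOfIdempotent_mul {p s : A} (hp : IsIdempotentElem p) (hs : s * s = 1)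
    (hsp : s * p = (1 - p) * s) (i j k l : Fin 2) :
    matrixUnitsOfIdempotent p s i j * matrixUnitsOfIdempotent p s k l =
      if j = k then matrixUnitsOfIdempotent p s i l else 0 := by
  have hss (x : A) : x * s * s = x := by rw [mul_assoc, hs, mul_one]
  have hpsp : p * s * p = 0 := by
    rw [mul_assoc, hsp, ← mul_assoc, mul_sub, mul_one, hp.eq, sub_self, zero_mul]
  fin_cases i <;> fin_cases j <;> fin_cases k <;> fin_cases l <;>
    simp [matrixUnitsOfIdempotent, mul_sub, sub_mul, ← mul_assoc, hp.eq, hs, hss, hpsp, hsp]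

theorem matrixUnitsOfIdempotent_sum (p s : A) : ∑ i, matrixUnitsOfIdempotent p s i i = 1 := by
  simp [matrixUnitsOfIdempotent]

theorem commute_mul_of_anticomm {a b c : A} (ha : a * c = -(c * a)) (hb : b * c = -(c * b)) :
    Commute (a * b) c := by
  rw [Commute, SemiconjBy, mul_assoc, hb, mul_neg, ← mul_assoc, ha, neg_mul, neg_neg, mul_assoc]

end Ring

namespace QuadraticMap

noncomputable def hyperbolicPlane (R : Type*) [CommRing R] : QuadraticForm R (R × R) :=
  (-sq).prod sq

@[simp]
theorem hyperbolicPlane_apply {R : Type*} [CommRing R] (x : R × R) :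
    hyperbolicPlane R x = x.2 * x.2 - x.1 * x.1 := by
  simp [hyperbolicPlane, sub_eq_neg_add]

variable {R ι κ : Type*} [CommRing R] [Fintype ι] [Fintype κ]

def weightedSumSquaresReindex (σ : ι ≃ κ) {w : ι → R} {w' : κ → R}
    (h : ∀ i, w' (σ i) = w i) :
    (weightedSumSquares R w).IsometryEquiv (weightedSumSquares R w') where
  toLinearEquiv := LinearEquiv.funCongrLeft R R σ.symm
  map_app' x := by
    rw [weightedSumSquares_apply, weightedSumSquares_apply, ← σ.sum_comp]
    simp [h]

def weightedSumSquaresSumElim (w₁ : ι → R) (w₂ : κ → R) :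
    (weightedSumSquares R (Sum.elim w₁ w₂)).IsometryEquiv
      ((weightedSumSquares R w₁).prod (weightedSumSquares R w₂)) where
  toLinearEquiv := LinearEquiv.sumArrowLequivProdArrow ι κ R R
  map_app' x := by simp [weightedSumSquares_apply, Fintype.sum_sum_type]

def weightedSumSquaresFinAdd {m n : ℕ} (w : Fin (m + n) → R) :
    (weightedSumSquares R w).IsometryEquiv
      ((weightedSumSquares R (w ∘ Fin.castAdd n)).prod
        (weightedSumSquares R (w ∘ Fin.natAdd m))) :=
  (weightedSumSquaresReindex finSumFinEquiv.symm fun i => by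
    rw [← finSumFinEquiv.apply_symm_apply i]
    rcases finSumFinEquiv.symm i <;> simp).trans (weightedSumSquaresSumElim _ _)

def weightedSumSquaresUnique [Unique ι] {w : ι → R} {Q : QuadraticForm R R}
    (h : ∀ x, Q x = w default * (x * x)) : (weightedSumSquares R w).IsometryEquiv Q where
  toLinearEquiv := LinearEquiv.funUnique ι R R
  map_app' x := by simp [h, weightedSumSquares_apply]

end QuadraticMap

open QuadraticMap

namespace CliffordAlgebraProdHyperbolic

variable {R M : Type*} [CommRing R] [AddCommGroup M] [Module R M] (Q : QuadraticForm R M)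

noncomputable def toMatrixLinear :
    M × (R × R) →ₗ[R] Matrix (Fin 2) (Fin 2) (CliffordAlgebra Q) where
  toFun x :=
    !![ι Q x.1, algebraMap R _ (x.2.1 + x.2.2); algebraMap R _ (x.2.2 - x.2.1), -ι Q x.1]
  map_add' x y := by
    ext i j; fin_cases i <;> fin_cases j <;> simp [add_add_add_comm, add_sub_add_comm, add_comm]
  map_smul' c x := by
    ext i j; fin_cases i <;> fin_cases j <;> simp [Algebra.smul_def, mul_add, mul_sub]

theorem toMatrixLinear_mul_self (x : M × (R × R)) :
    toMatrixLinear Q x * toMatrixLinear Q x = algebraMap R _ (Q.prod (hyperbolicPlane R) x) := by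
  obtain ⟨v, a, b⟩ := x
  have h₁ : (a + b) * (b - a) = b * b - a * a := by ring
  have h₂ : (b - a) * (a + b) = b * b - a * a := by ring
  ext i j
  fin_cases i <;> fin_cases j <;>
    simp [toMatrixLinear, Matrix.mul_apply, Matrix.algebraMap_matrix_apply, ← map_mul,
      ← map_add, -map_sub, h₁, h₂, add_comm, Algebra.commutes]

noncomputable def toMatrix : CliffordAlgebra (Q.prod (hyperbolicPlane R)) →ₐ[R]
    Matrix (Fin 2) (Fin 2) (CliffordAlgebra Q) :=
  lift _ ⟨toMatrixLinear Q, toMatrixLinear_mul_self Q⟩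

theorem toMatrix_ι (x : M × (R × R)) : toMatrix Q (ι _ x) = toMatrixLinear Q x :=
  lift_ι_apply _ _ _

noncomputable def eNeg : CliffordAlgebra (Q.prod (hyperbolicPlane R)) := ι _ (0, (1, 0))

noncomputable def ePos : CliffordAlgebra (Q.prod (hyperbolicPlane R)) := ι _ (0, (0, 1))

theorem eNeg_mul_self : eNeg Q * eNeg Q = -1 := by simp [eNeg]

theorem ePos_mul_self : ePos Q * ePos Q = 1 := by simp [ePos]

theorem ePos_mul_eNeg : ePos Q * eNeg Q = -(eNeg Q * ePos Q) :=
  ι_mul_ι_comm_of_isOrtho (by simp [IsOrtho])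

theorem ι_inl_mul_eNeg (v : M) : ι _ (v, 0) * eNeg Q = -(eNeg Q * ι _ (v, 0)) :=
  ι_mul_ι_comm_of_isOrtho (IsOrtho.inl_inr _ _)

theorem ι_inl_mul_ePos (v : M) : ι _ (v, 0) * ePos Q = -(ePos Q * ι _ (v, 0)) :=
  ι_mul_ι_comm_of_isOrtho (IsOrtho.inl_inr _ _)

theorem eNeg_mul_ι_inl (v : M) : eNeg Q * ι _ (v, 0) = -(ι _ (v, 0) * eNeg Q) :=
  ι_mul_ι_comm_of_isOrtho (IsOrtho.inr_inl _ _)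

theorem ePos_mul_ι_inl (v : M) : ePos Q * ι _ (v, 0) = -(ι _ (v, 0) * ePos Q) :=
  ι_mul_ι_comm_of_isOrtho (IsOrtho.inr_inl _ _)

theorem ι_inl_mul_self (v : M) :
    ι (Q.prod (hyperbolicPlane R)) (v, 0) * ι _ (v, 0) = algebraMap R _ (Q v) := by
  simp

theorem toMatrix_eNeg : toMatrix Q (eNeg Q) = !![0, 1; -1, 0] := by
  rw [eNeg, toMatrix_ι]; ext i j; fin_cases i <;> fin_cases j <;> simp [toMatrixLinear]

theorem toMatrix_ePos : toMatrix Q (ePos Q) = !![0, 1; 1, 0] := by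
  rw [ePos, toMatrix_ι]; ext i j; fin_cases i <;> fin_cases j <;> simp [toMatrixLinear]

theorem toMatrix_ι_inl (v : M) : toMatrix Q (ι _ (v, 0)) = !![ι Q v, 0; 0, -ι Q v] := by
  rw [toMatrix_ι]; ext i j; fin_cases i <;> fin_cases j <;> simp [toMatrixLinear]

theorem eNeg_mul_ePos_mul_self : eNeg Q * ePos Q * (eNeg Q * ePos Q) = 1 := by
  rw [mul_assoc, ← mul_assoc (ePos Q), ePos_mul_eNeg, neg_mul, mul_assoc, ePos_mul_self, mul_one,
    mul_neg, eNeg_mul_self, neg_neg]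

theorem eNeg_mul_ePos_mul_eNeg : eNeg Q * ePos Q * eNeg Q = -(eNeg Q * (eNeg Q * ePos Q)) := by
  rw [mul_assoc, ePos_mul_eNeg, mul_neg]

theorem eNeg_mul_ePos_mul_ePos : eNeg Q * ePos Q * ePos Q = -(ePos Q * (eNeg Q * ePos Q)) := by
  rw [← mul_assoc, ePos_mul_eNeg, neg_mul, neg_neg]

theorem commute_ι_inl_eNeg_mul_ePos (v : M) : Commute (ι _ (v, 0)) (eNeg Q * ePos Q) :=
  (commute_mul_of_anticomm (eNeg_mul_ι_inl Q v) (ePos_mul_ι_inl Q v)).symm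

noncomputable def twistedInl :
    CliffordAlgebra Q →ₐ[R] CliffordAlgebra (Q.prod (hyperbolicPlane R)) :=
  lift Q ⟨LinearMap.mulRight R (eNeg Q * ePos Q) ∘ₗ ι _ ∘ₗ LinearMap.inl R M (R × R), fun v => by
    simp only [LinearMap.comp_apply, LinearMap.mulRight_apply, LinearMap.inl_apply]
    rw [(commute_ι_inl_eNeg_mul_ePos Q v).symm.mul_mul_mul_comm, eNeg_mul_ePos_mul_self, mul_one,
      ι_inl_mul_self]⟩

theorem twistedInl_ι (v : M) : twistedInl Q (ι Q v) = ι _ (v, 0) * (eNeg Q * ePos Q) :=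
  lift_ι_apply _ _ _

theorem commute_twistedInl {y : CliffordAlgebra (Q.prod (hyperbolicPlane R))}
    (h : ∀ v, Commute (ι _ (v, 0) * (eNeg Q * ePos Q)) y) (a : CliffordAlgebra Q) :
    Commute (twistedInl Q a) y := by
  induction a using CliffordAlgebra.induction with
  | algebraMap r => rw [AlgHom.commutes]; exact Algebra.commutes r y
  | ι v => rw [twistedInl_ι]; exact h v
  | mul a b ha hb => rw [map_mul]; exact ha.mul_left hb
  | add a b ha hb => rw [map_add]; exact ha.add_left hb

theorem commute_twistedInl_eNeg (a : CliffordAlgebra Q) : Commute (twistedInl Q a) (eNeg Q) :=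
  commute_twistedInl Q
    (fun v => commute_mul_of_anticomm (ι_inl_mul_eNeg Q v) (eNeg_mul_ePos_mul_eNeg Q)) a

theorem commute_twistedInl_ePos (a : CliffordAlgebra Q) : Commute (twistedInl Q a) (ePos Q) :=
  commute_twistedInl Q
    (fun v => commute_mul_of_anticomm (ι_inl_mul_ePos Q v) (eNeg_mul_ePos_mul_ePos Q)) a

theorem toMatrix_twistedInl (a : CliffordAlgebra Q) : toMatrix Q (twistedInl Q a) = a • 1 := by
  induction a using CliffordAlgebra.induction with
  | algebraMap r =>
    rw [AlgHom.commutes, AlgHom.commutes]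
    ext i j; fin_cases i <;> fin_cases j <;> simp [Matrix.algebraMap_matrix_apply]
  | ι v =>
    rw [twistedInl_ι, map_mul, map_mul, toMatrix_ι_inl, toMatrix_eNeg, toMatrix_ePos]
    ext i j; fin_cases i <;> fin_cases j <;> simp
  | mul a b ha hb => rw [map_mul, map_mul, ha, hb, smul_mul_assoc, one_mul, smul_smul]
  | add a b ha hb => rw [map_add, map_add, ha, hb, add_smul]

variable [Invertible (2 : R)]

noncomputable def idem : CliffordAlgebra (Q.prod (hyperbolicPlane R)) :=
  (⅟2 : R) • (1 + eNeg Q * ePos Q)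

theorem two_smul_idem : (2 : R) • idem Q = 1 + eNeg Q * ePos Q := by
  rw [idem, smul_smul, mul_invOf_self, one_smul]

theorem idem_sub_one_sub_idem : idem Q - (1 - idem Q) = eNeg Q * ePos Q := by
  rw [sub_sub_eq_add_sub, ← two_smul R, two_smul_idem, add_sub_cancel_left]

theorem one_sub_idem : 1 - idem Q = (⅟2 : R) • (1 - eNeg Q * ePos Q) := by
  have h1 : (1 : CliffordAlgebra (Q.prod (hyperbolicPlane R))) = (⅟2 : R) • (1 + 1) := by
    rw [← two_smul R, smul_smul, invOf_mul_self, one_smul]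
  rw [idem]
  nth_rewrite 1 [h1]
  rw [← smul_sub, add_sub_add_left_eq_sub]

theorem isIdempotentElem_idem : IsIdempotentElem (idem Q) := by
  have h : (1 + eNeg Q * ePos Q) * (1 + eNeg Q * ePos Q) = (2 : R) • (1 + eNeg Q * ePos Q) := by
    simp only [add_mul, mul_add, one_mul, mul_one, eNeg_mul_ePos_mul_self, two_smul]; abel
  rw [IsIdempotentElem]
  nth_rewrite 1 [idem]
  rw [smul_mul_assoc, idem, mul_smul_comm, h, smul_smul (⅟2 : R) (2 : R), invOf_mul_self,
    one_smul]

theorem ePos_mul_idem : ePos Q * idem Q = (1 - idem Q) * ePos Q := by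
  rw [one_sub_idem, idem, mul_smul_comm, smul_mul_assoc, mul_add, sub_mul, mul_one, one_mul,
    ← mul_assoc, ePos_mul_eNeg, neg_mul, sub_eq_add_neg]

noncomputable def ofScalarMatrix :
    Matrix (Fin 2) (Fin 2) R →ₐ[R] CliffordAlgebra (Q.prod (hyperbolicPlane R)) :=
  Matrix.algHomOfMatrixUnits (matrixUnitsOfIdempotent (idem Q) (ePos Q))
    (matrixUnitsOfIdempotent_mul (isIdempotentElem_idem Q) (ePos_mul_self Q) (ePos_mul_idem Q))
    (matrixUnitsOfIdempotent_sum _ _)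

theorem ofScalarMatrix_apply (m : Matrix (Fin 2) (Fin 2) R) :
    ofScalarMatrix Q m = ∑ i, ∑ j, m i j • matrixUnitsOfIdempotent (idem Q) (ePos Q) i j :=
  Matrix.algHomOfMatrixUnits_apply _ _ _ m

theorem commute_twistedInl_ofScalarMatrix (a : CliffordAlgebra Q) (m : Matrix (Fin 2) (Fin 2) R) :
    Commute (twistedInl Q a) (ofScalarMatrix Q m) := by
  have he := commute_twistedInl_eNeg Q a
  have hf := commute_twistedInl_ePos Q a
  have hp : Commute (twistedInl Q a) (idem Q) :=
    ((Commute.one_right _).add_right (he.mul_right hf)).smul_right _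
  rw [ofScalarMatrix_apply]
  refine .sum_right _ _ _ fun i _ => .sum_right _ _ _ fun j _ => .smul_right ?_ _
  fin_cases i <;> fin_cases j
  exacts [hp, hp.mul_right hf, ((Commute.one_right _).sub_right hp).mul_right hf,
    (Commute.one_right _).sub_right hp]

noncomputable def ofTensor : CliffordAlgebra Q ⊗[R] Matrix (Fin 2) (Fin 2) R →ₐ[R]
    CliffordAlgebra (Q.prod (hyperbolicPlane R)) :=
  Algebra.TensorProduct.lift (twistedInl Q) (ofScalarMatrix Q) (commute_twistedInl_ofScalarMatrix Q)

noncomputable def ofMatrix : Matrix (Fin 2) (Fin 2) (CliffordAlgebra Q) →ₐ[R]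
    CliffordAlgebra (Q.prod (hyperbolicPlane R)) :=
  (ofTensor Q).comp (matrixEquivTensor (Fin 2) R (CliffordAlgebra Q)).toAlgHom

theorem ofMatrix_smul_map (a : CliffordAlgebra Q) (m : Matrix (Fin 2) (Fin 2) R) :
    ofMatrix Q (a • m.map (algebraMap R _)) = twistedInl Q a * ofScalarMatrix Q m := by
  rw [← matrixEquivTensor_apply_symm, ofMatrix, AlgHom.comp_apply, AlgEquiv.toAlgHom_apply,
    AlgEquiv.apply_symm_apply, ofTensor, Algebra.TensorProduct.lift_tmul]

theorem toMatrix_idem : toMatrix Q (idem Q) = Matrix.single 0 0 1 := by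
  have h : 1 + !![0, 1; -1, 0] * !![0, 1; 1, 0] =
      (2 : R) • (Matrix.single 0 0 1 : Matrix (Fin 2) (Fin 2) (CliffordAlgebra Q)) := by
    ext i j; fin_cases i <;> fin_cases j <;> simp [two_smul]
  rw [idem, map_smul, map_add, map_one, map_mul, toMatrix_eNeg, toMatrix_ePos, h, smul_smul,
    invOf_mul_self, one_smul]

theorem toMatrix_matrixUnitsOfIdempotent (i j : Fin 2) :
    toMatrix Q (matrixUnitsOfIdempotent (idem Q) (ePos Q) i j) = Matrix.single i j 1 := by
  fin_cases i <;> fin_cases j <;> ext a b <;> fin_cases a <;> fin_cases b <;>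
    simp [matrixUnitsOfIdempotent, toMatrix_idem, toMatrix_ePos, sub_mul, Matrix.mul_apply]

theorem toMatrix_ofScalarMatrix (m : Matrix (Fin 2) (Fin 2) R) :
    toMatrix Q (ofScalarMatrix Q m) = m.map (algebraMap R _) := by
  rw [ofScalarMatrix_apply]
  simp only [map_sum, map_smul, toMatrix_matrixUnitsOfIdempotent]
  conv_rhs => rw [Matrix.matrix_eq_sum_single (m.map _)]
  simp [Matrix.smul_single, Algebra.algebraMap_eq_smul_one]

theorem toMatrix_comp_ofMatrix : (toMatrix Q).comp (ofMatrix Q) = AlgHom.id R _ := by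
  have h : (toMatrix Q).comp (ofTensor Q) =
      (matrixEquivTensor (Fin 2) R (CliffordAlgebra Q)).symm :=
    Algebra.TensorProduct.ext' fun a m => by
      simp [ofTensor, toMatrix_twistedInl, toMatrix_ofScalarMatrix]
  rw [ofMatrix, ← AlgHom.comp_assoc, h, AlgEquiv.symm_comp]

theorem ofMatrix_toMatrix_ι_inl (v : M) : ofMatrix Q (toMatrix Q (ι _ (v, 0))) = ι _ (v, 0) := by
  have h : toMatrix Q (ι _ (v, 0)) =
      ι Q v • (!![1, 0; 0, -1] : Matrix (Fin 2) (Fin 2) R).map (algebraMap R _) := by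
    rw [toMatrix_ι_inl]; ext i j; fin_cases i <;> fin_cases j <;> simp
  have hJ : ofScalarMatrix Q !![1, 0; 0, -1] = eNeg Q * ePos Q := by
    rw [← idem_sub_one_sub_idem]
    simp [ofScalarMatrix_apply, Fin.sum_univ_two, matrixUnitsOfIdempotent, sub_eq_add_neg, add_comm]
  rw [h, ofMatrix_smul_map, twistedInl_ι, hJ, mul_assoc, eNeg_mul_ePos_mul_self, mul_one]

theorem ofMatrix_toMatrix_eNeg : ofMatrix Q (toMatrix Q (eNeg Q)) = eNeg Q := by
  have h : toMatrix Q (eNeg Q) = (1 : CliffordAlgebra Q) •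
      (!![0, 1; -1, 0] : Matrix (Fin 2) (Fin 2) R).map (algebraMap R _) := by
    rw [toMatrix_eNeg]; ext i j; fin_cases i <;> fin_cases j <;> simp
  rw [h, ofMatrix_smul_map, map_one, one_mul]
  simp [ofScalarMatrix_apply, Fin.sum_univ_two, matrixUnitsOfIdempotent, ← sub_eq_add_neg,
    ← sub_mul, idem_sub_one_sub_idem, mul_assoc, ePos_mul_self]

theorem ofMatrix_toMatrix_ePos : ofMatrix Q (toMatrix Q (ePos Q)) = ePos Q := by
  have h : toMatrix Q (ePos Q) = (1 : CliffordAlgebra Q) •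
      (!![0, 1; 1, 0] : Matrix (Fin 2) (Fin 2) R).map (algebraMap R _) := by
    rw [toMatrix_ePos]; ext i j; fin_cases i <;> fin_cases j <;> simp
  rw [h, ofMatrix_smul_map, map_one, one_mul]
  simp [ofScalarMatrix_apply, Fin.sum_univ_two, matrixUnitsOfIdempotent, ← add_mul]

theorem ofMatrix_comp_toMatrix : (ofMatrix Q).comp (toMatrix Q) = AlgHom.id R _ := by
  ext v
  exacts [ofMatrix_toMatrix_ι_inl Q v, ofMatrix_toMatrix_eNeg Q, ofMatrix_toMatrix_ePos Q]

noncomputable def equiv : CliffordAlgebra (Q.prod (hyperbolicPlane R)) ≃ₐ[R]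
    Matrix (Fin 2) (Fin 2) (CliffordAlgebra Q) :=
  AlgEquiv.ofAlgHom (toMatrix Q) (ofMatrix Q) (toMatrix_comp_ofMatrix Q) (ofMatrix_comp_toMatrix Q)

end CliffordAlgebraProdHyperbolic

noncomputable def Qpq_isometryEquiv (p q : ℕ) :
    (Qpq p q).IsometryEquiv ((weightedSumSquares ℝ fun _ : Fin p => (-1 : ℝ)).prod
      (weightedSumSquares ℝ fun _ : Fin q => (1 : ℝ))) :=
  (weightedSumSquaresFinAdd _).trans
    ((QuadraticForm.weightedSumSquaresCongr (by ext; simp)).prod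
      (QuadraticForm.weightedSumSquaresCongr (by ext; simp)))

noncomputable def Qpq_succ_succ_isometryEquiv (p q : ℕ) :
    (Qpq (p + 1) (q + 1)).IsometryEquiv ((Qpq p q).prod (hyperbolicPlane ℝ)) :=
  (Qpq_isometryEquiv (p + 1) (q + 1)).trans <|
    ((weightedSumSquaresFinAdd _).prod (weightedSumSquaresFinAdd _)).trans <|
    (IsometryEquiv.prodProdProdComm _ _ _ _).trans <|
    (Qpq_isometryEquiv p q).symm.prod
      ((weightedSumSquaresUnique fun _ => by simp).prod (weightedSumSquaresUnique fun _ => by simp))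

/-- `(1,1)`-periodicity of Clifford algebras: `C^{p+1,q+1} ≃ M₂(C^{p,q})`. -/
theorem clifford_one_one_periodicity (p q : ℕ) :
    Nonempty (Cpq (p + 1) (q + 1) ≃ₐ[ℝ] Matrix (Fin 2) (Fin 2) (Cpq p q)) :=
  ⟨(equivOfIsometry (Qpq_succ_succ_isometryEquiv p q)).trans
    (CliffordAlgebraProdHyperbolic.equiv (Qpq p q))⟩
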